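/- arXiv:1507.08150 — 6 statements merged into one kernel-verified Lean document; each statement's English description precedes it below -/
import Mathlib

section
/- Let L, K, R be positive integers, let R_a be an R×R Hermitian positive definite complex matrix with eigenvalues η_1,…,η_R, let R_t be an L×L Hermitian positive definite complex matrix with eigenvalues δ_1,…,δ_L, let A be a K×L complex matrix with AᴴA = c·I_L for some c > 0, and let σ² > 0. Then trace(((R_a ⊗ R_t)⁻¹ + (I_R ⊗ A)ᴴ(σ²·I_{RK})⁻¹(I_R ⊗ A))⁻¹) = Σ_{j=1}^{R} Σ_{i=1}^{L} η_j·δ_i / (1 + (c/σ²)·η_j·δ_i). (This is the closed-form MSE of the optimal centralized LMMSE channel estimator over the full antenna array.) -/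
open Matrix
open scoped ComplexOrder Kronecker

/-!
Because `AᴴA = c·I`, the pilot term `(I ⊗ A)ᴴ (σ²I)⁻¹ (I ⊗ A)` collapses to `(c/σ²)·I`.
If unitaries `U`, `V` diagonalize `R_a`, `R_t`, then the unitary `U ⊗ V` diagonalizes `R_a ⊗ R_t`
with eigenvalues `η_j δ_i`. Conjugation by a unitary commutes with inversion and with adding a
scalar matrix and preserves the trace, so the trace is `∑ (1/(η_j δ_i) + c/σ²)⁻¹`.
-/

namespace Matrix

section UnitaryConj

variable {n α : Type*} [Fintype n] [DecidableEq n] [CommRing α] [StarRing α]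
  {u : Matrix n n α}

theorem inv_unitary_conj (hu : u ∈ unitary (Matrix n n α)) (A : Matrix n n α) :
    (u * A * star u)⁻¹ = u * A⁻¹ * star u := by
  rw [mul_inv_rev, mul_inv_rev, inv_eq_left_inv (Unitary.mul_star_self_of_mem hu),
    inv_eq_left_inv (Unitary.star_mul_self_of_mem hu), mul_assoc]

theorem trace_unitary_conj (hu : u ∈ unitary (Matrix n n α)) (A : Matrix n n α) :
    trace (u * A * star u) = trace A := by
  rw [trace_mul_cycle, Unitary.star_mul_self_of_mem hu, one_mul]

theorem unitary_conj_add_smul_one (hu : u ∈ unitary (Matrix n n α)) (A : Matrix n n α)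
    (s : α) : u * A * star u + s • 1 = u * (A + s • 1) * star u := by
  rw [mul_add, add_mul, mul_smul_one, smul_mul, Unitary.mul_star_self_of_mem hu]

end UnitaryConj

theorem inv_diagonal_of_ne_zero {n K : Type*} [Fintype n] [DecidableEq n] [Field K]
    {d : n → K} (hd : ∀ i, d i ≠ 0) : (diagonal d)⁻¹ = diagonal d⁻¹ := by
  refine inv_eq_right_inv ?_
  rw [diagonal_mul_diagonal, ← diagonal_one]
  exact congrArg diagonal (funext fun i => mul_inv_cancel₀ (hd i))

theorem smul_one_inv {n K : Type*} [Fintype n] [DecidableEq n] [Field K] (σ : K) :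
    (σ • (1 : Matrix n n K))⁻¹ = σ⁻¹ • 1 := by
  rcases eq_or_ne σ 0 with rfl | hσ
  · simp
  · exact inv_eq_right_inv (by rw [smul_mul_smul, one_mul, mul_inv_cancel₀ hσ, one_smul])

theorem conjTranspose_one_kronecker_mul_smul_one_inv_mul {m k l K : Type*} [Fintype m]
    [DecidableEq m] [Fintype k] [DecidableEq k] [DecidableEq l] [Field K] [StarRing K]
    {A : Matrix k l K} {c : K} (hA : Aᴴ * A = c • 1) (σ : K) :
    ((1 : Matrix m m K) ⊗ₖ A)ᴴ * (σ • (1 : Matrix (m × k) (m × k) K))⁻¹ *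
        ((1 : Matrix m m K) ⊗ₖ A) = (c / σ) • 1 := by
  rw [smul_one_inv, Matrix.mul_smul, Matrix.mul_one, Matrix.smul_mul, conjTranspose_kronecker,
    conjTranspose_one, ← mul_kronecker_mul, one_mul, hA, kronecker_smul, one_kronecker_one,
    smul_smul, div_eq_inv_mul]

theorem IsHermitian.kronecker_eq_unitary_conj_diagonal {m n 𝕜 : Type*} [Fintype m]
    [DecidableEq m] [Fintype n] [DecidableEq n] [RCLike 𝕜] {A : Matrix m m 𝕜}
    {B : Matrix n n 𝕜} (hA : A.IsHermitian) (hB : B.IsHermitian) :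
    A ⊗ₖ B = ((hA.eigenvectorUnitary : Matrix m m 𝕜) ⊗ₖ (hB.eigenvectorUnitary : Matrix n n 𝕜)) *
      diagonal (fun p => ((hA.eigenvalues p.1 * hB.eigenvalues p.2 : ℝ) : 𝕜)) *
      star ((hA.eigenvectorUnitary : Matrix m m 𝕜) ⊗ₖ (hB.eigenvectorUnitary : Matrix n n 𝕜)) := by
  conv_lhs => rw [hA.spectral_theorem, hB.spectral_theorem]
  simp only [Unitary.conjStarAlgAut_apply, mul_kronecker_mul, diagonal_kronecker_diagonal,
    star_eq_conjTranspose, conjTranspose_kronecker, Function.comp_apply, RCLike.ofReal_mul]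

theorem trace_inv_inv_add_smul_one_unitary_conj_diagonal {n 𝕜 : Type*} [Fintype n]
    [DecidableEq n] [RCLike 𝕜] {u : Matrix n n 𝕜} (hu : u ∈ unitary (Matrix n n 𝕜))
    {d : n → ℝ} (hd : ∀ i, 0 < d i) {s : ℝ} (hs : 0 ≤ s) :
    trace (((u * diagonal (fun i => (d i : 𝕜)) * star u)⁻¹ + (s : 𝕜) • 1)⁻¹) =
      ∑ i, ((d i / (1 + s * d i) : ℝ) : 𝕜) := by
  have hd_ne : ∀ i, (d i : 𝕜) ≠ 0 := fun i => RCLike.ofReal_ne_zero.mpr (hd i).ne'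
  have hinv_add_ne : ∀ i, (d i : 𝕜)⁻¹ + s ≠ 0 := fun i => by
    rw [← RCLike.ofReal_inv, ← RCLike.ofReal_add, RCLike.ofReal_ne_zero]
    exact (add_pos_of_pos_of_nonneg (inv_pos.mpr (hd i)) hs).ne'
  rw [inv_unitary_conj hu, inv_diagonal_of_ne_zero hd_ne, unitary_conj_add_smul_one hu,
    smul_one_eq_diagonal, diagonal_add]
  simp only [Pi.inv_apply]
  rw [inv_unitary_conj hu, inv_diagonal_of_ne_zero hinv_add_ne, trace_unitary_conj hu,
    trace_diagonal]
  refine Finset.sum_congr rfl fun i _ => ?_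
  simp only [Pi.inv_apply]
  push_cast
  field_simp [hd_ne i]

end Matrix

theorem optimal_lmmse_mse_general {L K Rdim : ℕ}
    (Ra : Matrix (Fin Rdim) (Fin Rdim) ℂ) (hRa : Ra.PosDef)
    (η : Fin Rdim → ℝ) (hη : hRa.isHermitian.eigenvalues = η)
    (Rt : Matrix (Fin L) (Fin L) ℂ) (hRt : Rt.PosDef)
    (δ : Fin L → ℝ) (hδ : hRt.isHermitian.eigenvalues = δ)
    (A : Matrix (Fin K) (Fin L) ℂ) (c : ℝ) (hc : 0 < c)
    (hA : Aᴴ * A = (c : ℂ) • (1 : Matrix (Fin L) (Fin L) ℂ))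
    (σ2 : ℝ) (hσ : 0 < σ2) :
    Matrix.trace ((Ra ⊗ₖ Rt)⁻¹ +
        ((1 : Matrix (Fin Rdim) (Fin Rdim) ℂ) ⊗ₖ A)ᴴ *
          ((σ2 : ℂ) • (1 : Matrix (Fin Rdim × Fin K) (Fin Rdim × Fin K) ℂ))⁻¹ *
          ((1 : Matrix (Fin Rdim) (Fin Rdim) ℂ) ⊗ₖ A))⁻¹
      = ∑ j, ∑ i, ((η j * δ i / (1 + (c / σ2) * (η j * δ i)) : ℝ) : ℂ) := by
  subst hη hδ
  have hW := kronecker_mem_unitary hRa.isHermitian.eigenvectorUnitary.2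
    hRt.isHermitian.eigenvectorUnitary.2
  rw [conjTranspose_one_kronecker_mul_smul_one_inv_mul hA, ← Complex.ofReal_div,
    hRa.isHermitian.kronecker_eq_unitary_conj_diagonal hRt.isHermitian]
  exact (trace_inv_inv_add_smul_one_unitary_conj_diagonal hW
    (fun p => mul_pos (hRa.eigenvalues_pos p.1) (hRt.eigenvalues_pos p.2))
    (div_pos hc hσ).le).trans (Fintype.sum_prod_type _)

/-- Closed-form MSE of the optimal centralized LMMSE channel estimator over the full
antenna array: with composite channel covariance `R_a ⊗ R_t` and composite pilot matrix
`I_R ⊗ A` where `AᴴA = c·I_L`,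
`trace(((R_a ⊗ R_t)⁻¹ + (I_R ⊗ A)ᴴ(σ²I_{RK})⁻¹(I_R ⊗ A))⁻¹)
  = Σ_j Σ_i η_j δ_i / (1 + (c/σ²) η_j δ_i)`. -/
theorem optimal_lmmse_mse {L K Rdim : ℕ} (hL : 0 < L) (hK : 0 < K) (hRdim : 0 < Rdim)
    (Ra : Matrix (Fin Rdim) (Fin Rdim) ℂ) (hRa : Ra.PosDef)
    (η : Fin Rdim → ℝ) (hη : hRa.isHermitian.eigenvalues = η)
    (Rt : Matrix (Fin L) (Fin L) ℂ) (hRt : Rt.PosDef)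
    (δ : Fin L → ℝ) (hδ : hRt.isHermitian.eigenvalues = δ)
    (A : Matrix (Fin K) (Fin L) ℂ) (c : ℝ) (hc : 0 < c)
    (hA : Aᴴ * A = (c : ℂ) • (1 : Matrix (Fin L) (Fin L) ℂ))
    (σ2 : ℝ) (hσ : 0 < σ2) :
    Matrix.trace ((Ra ⊗ₖ Rt)⁻¹ +
        ((1 : Matrix (Fin Rdim) (Fin Rdim) ℂ) ⊗ₖ A)ᴴ *
          ((σ2 : ℂ) • (1 : Matrix (Fin Rdim × Fin K) (Fin Rdim × Fin K) ℂ))⁻¹ *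
          ((1 : Matrix (Fin Rdim) (Fin Rdim) ℂ) ⊗ₖ A))⁻¹
      = ∑ j, ∑ i, ((η j * δ i / (1 + (c / σ2) * (η j * δ i)) : ℝ) : ℂ) :=
  optimal_lmmse_mse_general Ra hRa η hη Rt hRt δ hδ A c hc hA σ2 hσ
end

section
/- Let a > 0 be real, let δ_1,…,δ_L be positive reals, and let η_1,…,η_R be nonnegative reals with Σ_{j=1}^{R} η_j = R. Then Σ_{j=1}^{R} Σ_{i=1}^{L} η_j·δ_i/(1 + a·η_j·δ_i) ≤ R · Σ_{i=1}^{L} δ_i/(1 + a·δ_i). (Hence, since a spatial correlation matrix has unit diagonal and thus trace R, the optimal centralized LMMSE MSE never exceeds the localized LMMSE MSE, with equality when all η_j = 1, i.e., spatially uncorrelated antennas.) -/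
/-!
The map `t ↦ t δ / (1 + a t δ)` is concave on `[0, ∞)`, so it lies below its tangent line at
`t = 1`. Summing that tangent bound at `t = η_j` over `i` and `j`, the first-order terms carry
the factor `Σ_j (η_j - 1) = 0` and vanish.
-/

open Finset

lemma div_one_add_mul_le_tangent {a x y : ℝ} (ha : 0 ≤ a) (hx : 0 ≤ x) (hy : 0 ≤ y) :
    x / (1 + a * x) ≤ y / (1 + a * y) + (x - y) / (1 + a * y) ^ 2 := by
  have hx' : 0 < 1 + a * x := by positivity
  have hy' : 0 < 1 + a * y := by positivity
  have gap : y / (1 + a * y) + (x - y) / (1 + a * y) ^ 2 - x / (1 + a * x)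
      = a * (x - y) ^ 2 / ((1 + a * y) ^ 2 * (1 + a * x)) := by
    field_simp
    ring
  exact sub_nonneg.mp (gap ▸ by positivity)

lemma sum_mul_div_one_add_mul_le {ι : Type*} (s : Finset ι) {a t : ℝ} (ha : 0 ≤ a) (ht : 0 ≤ t)
    (δ : ι → ℝ) (hδ : ∀ i ∈ s, 0 ≤ δ i) :
    ∑ i ∈ s, t * δ i / (1 + a * (t * δ i))
      ≤ ∑ i ∈ s, δ i / (1 + a * δ i) + (t - 1) * ∑ i ∈ s, δ i / (1 + a * δ i) ^ 2 := by
  rw [mul_sum, ← sum_add_distrib]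
  refine sum_le_sum fun i hi => ?_
  calc t * δ i / (1 + a * (t * δ i))
      ≤ δ i / (1 + a * δ i) + (t * δ i - δ i) / (1 + a * δ i) ^ 2 :=
        div_one_add_mul_le_tangent ha (mul_nonneg ht (hδ i hi)) (hδ i hi)
    _ = δ i / (1 + a * δ i) + (t - 1) * (δ i / (1 + a * δ i) ^ 2) := by ring

/-- The optimal centralized LMMSE MSE never exceeds the localized LMMSE MSE:
if `a > 0`, the `δ_i` are positive, and the `η_j` are nonnegative with `Σ_j η_j = R`,
then `Σ_j Σ_i η_j δ_i/(1 + a η_j δ_i) ≤ R · Σ_i δ_i/(1 + a δ_i)`. -/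
theorem olmmse_le_llmmse {L Rdim : ℕ} (a : ℝ) (ha : 0 < a)
    (δ : Fin L → ℝ) (hδ : ∀ i, 0 < δ i)
    (η : Fin Rdim → ℝ) (hη : ∀ j, 0 ≤ η j) (hsum : ∑ j, η j = (Rdim : ℝ)) :
    ∑ j, ∑ i, η j * δ i / (1 + a * (η j * δ i))
      ≤ (Rdim : ℝ) * ∑ i, δ i / (1 + a * δ i) := by
  set A := ∑ i, δ i / (1 + a * δ i)
  set B := ∑ i, δ i / (1 + a * δ i) ^ 2
  have hfirst_order : ∑ j, (η j - 1) = 0 := by simp [sum_sub_distrib, hsum]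
  calc ∑ j, ∑ i, η j * δ i / (1 + a * (η j * δ i))
      ≤ ∑ j, (A + (η j - 1) * B) := sum_le_sum fun j _ =>
        sum_mul_div_one_add_mul_le _ ha.le (hη j) δ fun i _ => (hδ i).le
    _ = Rdim * A := by simp [sum_add_distrib, ← sum_mul, hfirst_order]
end

section
/- Theorem 1 (LS MSE under pilot contamination): Let L, K be positive integers, let R_t be an L×L Hermitian positive definite complex matrix with eigenvalues δ_1,…,δ_L, let A be a K×L complex matrix with AᴴA = K·E_x·I_L for some E_x > 0, let σ_w² > 0, and let σ_𝓘² ≥ 0. Then trace((Aᴴ(σ_w²·I_K + σ_𝓘²·A·R_t·Aᴴ)⁻¹A)⁻¹) = L/(ρK) + σ_𝓘²·Σ_{i=1}^{L} δ_i, where ρ = E_x/σ_w². (Summing over R identical antennas, the total LS MSE under AWGN and pilot contamination is MSE^{(LS)} = RL/(ρK) + R·σ_𝓘²·trace(R_t); the contamination term cannot be reduced by adding pilots and persists as ρ → ∞.) -/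
open Matrix
open scoped ComplexOrder

/-!
Orthogonal pilots (`AᴴA = c·I` with `c = K·E_x`) intertwine the two covariances:
`M A = A N` for `M = σ_w² I + σ_𝓘² A R_t Aᴴ` and `N = σ_w² I + c σ_𝓘² R_t`. Hence
`Aᴴ M⁻¹ A = Aᴴ A N⁻¹ = c N⁻¹`, so the error covariance is `N / c`, whose trace is
`L σ_w² / c + σ_𝓘² tr R_t`, and `tr R_t` is the sum of the eigenvalues of `R_t`.
-/

namespace Matrix

section Intertwining

variable {m n α : Type*} [Fintype m] [Fintype n] [DecidableEq m] [DecidableEq n]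

theorem nonsing_inv_mul_eq_mul_nonsing_inv_of_mul_eq [CommRing α]
    {M : Matrix m m α} {N : Matrix n n α} {A : Matrix m n α}
    (hM : IsUnit M.det) (hN : IsUnit N.det) (h : M * A = A * N) : M⁻¹ * A = A * N⁻¹ :=
  calc M⁻¹ * A = M⁻¹ * (A * N) * N⁻¹ := by
        rw [Matrix.mul_assoc, Matrix.mul_assoc, mul_nonsing_inv _ hN, Matrix.mul_one]
    _ = A * N⁻¹ := by rw [← h, ← Matrix.mul_assoc, nonsing_inv_mul _ hM, Matrix.one_mul]

variable [CommRing α] [StarRing α] {A : Matrix m n α} {c : α}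

theorem smul_one_add_smul_mul_mul_conjTranspose_mul
    (hA : Aᴴ * A = c • 1) (P : Matrix n n α) (a b : α) :
    (a • 1 + b • (A * P * Aᴴ)) * A = A * (a • 1 + (b * c) • P) := by
  rw [Matrix.add_mul, Matrix.mul_add, Matrix.smul_mul b, Matrix.mul_assoc (A * P), hA]
  simp only [Matrix.smul_mul, Matrix.mul_smul, Matrix.one_mul, Matrix.mul_one, smul_smul,
    mul_comm b c]

end Intertwining

theorem inv_conjTranspose_mul_nonsing_inv_mul_of_conjTranspose_mul_self_eq_smul
    {m n 𝕜 : Type*} [Fintype m] [Fintype n] [DecidableEq m] [DecidableEq n]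
    [Field 𝕜] [StarRing 𝕜] {A : Matrix m n 𝕜} {c : 𝕜} (hA : Aᴴ * A = c • 1) (hc : c ≠ 0)
    (P : Matrix n n 𝕜) {a b : 𝕜}
    (hM : IsUnit (a • 1 + b • (A * P * Aᴴ)).det) (hN : IsUnit (a • 1 + (b * c) • P).det) :
    (Aᴴ * (a • 1 + b • (A * P * Aᴴ))⁻¹ * A)⁻¹ = c⁻¹ • (a • 1 + (b * c) • P) := by
  rw [Matrix.mul_assoc, nonsing_inv_mul_eq_mul_nonsing_inv_of_mul_eq hM hN
      (smul_one_add_smul_mul_mul_conjTranspose_mul hA P a b),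
    ← Matrix.mul_assoc, hA, Matrix.smul_mul, Matrix.one_mul]
  refine inv_eq_left_inv ?_
  rw [Matrix.smul_mul, Matrix.mul_smul, mul_nonsing_inv _ hN, smul_smul, inv_mul_cancel₀ hc,
    one_smul]

theorem posDef_smul_one_add_smul {n 𝕜 : Type*} [Fintype n] [DecidableEq n] [RCLike 𝕜]
    {P : Matrix n n 𝕜} (hP : P.PosSemidef) {a b : 𝕜} (ha : 0 < a) (hb : 0 ≤ b) :
    (a • 1 + b • P).PosDef :=
  (PosDef.one.smul ha).add_posSemidef (hP.smul hb)

end Matrix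

theorem ls_mse_pilot_contamination_general {L K : ℕ} (hK : 0 < K)
    (Rt : Matrix (Fin L) (Fin L) ℂ) (hRt : Rt.PosDef)
    (δ : Fin L → ℝ) (hδ : hRt.isHermitian.eigenvalues = δ)
    (A : Matrix (Fin K) (Fin L) ℂ) (Ex : ℝ) (hEx : 0 < Ex)
    (hA : Aᴴ * A = (((K : ℝ) * Ex : ℝ) : ℂ) • (1 : Matrix (Fin L) (Fin L) ℂ))
    (σw2 : ℝ) (hσw : 0 < σw2) (σI2 : ℝ) (hσI : 0 ≤ σI2)
    (ρ : ℝ) (hρ : ρ = Ex / σw2) :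
    Matrix.trace (Aᴴ *
        ((σw2 : ℂ) • (1 : Matrix (Fin K) (Fin K) ℂ) + (σI2 : ℂ) • (A * Rt * Aᴴ))⁻¹
        * A)⁻¹
      = (((L : ℝ) / (ρ * K) + σI2 * ∑ i, δ i : ℝ) : ℂ) := by
  have hKEx : 0 < (K : ℝ) * Ex := by positivity
  have hM := posDef_smul_one_add_smul (hRt.posSemidef.mul_mul_conjTranspose_same A)
    (Complex.zero_lt_real.2 hσw) (Complex.zero_le_real.2 hσI)
  have hN := posDef_smul_one_add_smul hRt.posSemidef (Complex.zero_lt_real.2 hσw)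
    (mul_nonneg (Complex.zero_le_real.2 hσI) (Complex.zero_le_real.2 hKEx.le))
  rw [inv_conjTranspose_mul_nonsing_inv_mul_of_conjTranspose_mul_self_eq_smul hA
      (Complex.ofReal_ne_zero.2 hKEx.ne') Rt ((isUnit_iff_isUnit_det _).1 hM.isUnit)
      ((isUnit_iff_isUnit_det _).1 hN.isUnit),
    trace_smul, trace_add, trace_smul, trace_smul, trace_one, Fintype.card_fin,
    hRt.isHermitian.trace_eq_sum_eigenvalues, hδ, hρ, RCLike.ofReal_eq_complex_ofReal]
  simp only [smul_eq_mul]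
  push_cast
  field_simp

/-- Theorem 1 of the paper (LS MSE under pilot contamination): with `AᴴA = K·E_x·I_L`,
noise power `σ_w²`, per-subcarrier interference power `σ_𝓘²`, tap correlation `R_t`
with eigenvalues `δ_i`, and `ρ = E_x/σ_w²`,
`trace((Aᴴ(σ_w²I_K + σ_𝓘²·A R_t Aᴴ)⁻¹A)⁻¹) = L/(ρK) + σ_𝓘²·Σ_i δ_i`. -/
theorem ls_mse_pilot_contamination {L K : ℕ} (hL : 0 < L) (hK : 0 < K)
    (Rt : Matrix (Fin L) (Fin L) ℂ) (hRt : Rt.PosDef)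
    (δ : Fin L → ℝ) (hδ : hRt.isHermitian.eigenvalues = δ)
    (A : Matrix (Fin K) (Fin L) ℂ) (Ex : ℝ) (hEx : 0 < Ex)
    (hA : Aᴴ * A = (((K : ℝ) * Ex : ℝ) : ℂ) • (1 : Matrix (Fin L) (Fin L) ℂ))
    (σw2 : ℝ) (hσw : 0 < σw2) (σI2 : ℝ) (hσI : 0 ≤ σI2)
    (ρ : ℝ) (hρ : ρ = Ex / σw2) :
    Matrix.trace (Aᴴ *
        ((σw2 : ℂ) • (1 : Matrix (Fin K) (Fin K) ℂ) + (σI2 : ℂ) • (A * Rt * Aᴴ))⁻¹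
        * A)⁻¹
      = (((L : ℝ) / (ρ * K) + σI2 * ∑ i, δ i : ℝ) : ℂ) :=
  ls_mse_pilot_contamination_general hK Rt hRt δ hδ A Ex hEx hA σw2 hσw σI2 hσI ρ hρ
end

section
/- Theorem 2 (L-LMMSE MSE under pilot contamination): Let L, K be positive integers, let R_t be an L×L Hermitian positive definite complex matrix with eigenvalues δ_1,…,δ_L, let A be a K×L complex matrix with AᴴA = K·E_x·I_L for some E_x > 0, let σ_w² > 0, set ρ = E_x/σ_w², and let σ_𝓘² ≥ 0. Then trace((R_t⁻¹ + Aᴴ(σ_w²·I_K + σ_𝓘²·A·R_t·Aᴴ)⁻¹A)⁻¹) = Σ_{i=1}^{L} δ_i·(1 + ρK·δ_i·σ_𝓘²)/(1 + ρK·δ_i + ρK·δ_i·σ_𝓘²). (Summing over R identical antennas gives the total localized LMMSE MSE under AWGN and pilot contamination, MSE^{(L)} = R·Σ_i δ_i(1+ρKδ_iσ_𝓘²)/(1+ρKδ_i+ρKδ_iσ_𝓘²).) -/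
/-!
Since `AᴴA = c • 1` with `c = K·E_x`, the push-through identity
`(σ_w² • 1 + σ_𝓘² • A R_t Aᴴ) A = A (σ_w² • 1 + σ_𝓘² c • R_t)` turns `Aᴴ R_𝓔⁻¹ A` into
`c • (σ_w² • 1 + σ_𝓘² c • R_t)⁻¹`. The error covariance is then the function
`f(x) = (x⁻¹ + c / (σ_w² + σ_𝓘² c x))⁻¹` of `R_t` in the functional calculus, so its trace is
`∑ i, f(δ_i)`, which is the claimed expression once `c = ρ K σ_w²` is substituted.
-/

open Matrix
open scoped ComplexOrder

namespace Matrix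

variable {m n 𝕜 : Type*} [Fintype m] [Fintype n] [DecidableEq m] [DecidableEq n]

theorem inv_mul_eq_mul_inv_of_mul_eq {α : Type*} [CommRing α] {M : Matrix m m α}
    {S : Matrix n n α} {A : Matrix m n α} (hM : IsUnit M.det) (hS : IsUnit S.det)
    (h : M * A = A * S) : M⁻¹ * A = A * S⁻¹ := by
  calc M⁻¹ * A = M⁻¹ * (A * S) * S⁻¹ := by
        rw [Matrix.mul_assoc, Matrix.mul_assoc, mul_nonsing_inv _ hS, Matrix.mul_one]
    _ = A * S⁻¹ := by rw [← h, ← Matrix.mul_assoc, nonsing_inv_mul _ hM, Matrix.one_mul]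

theorem add_smul_mul_mul_conjTranspose_mul {α : Type*} [CommRing α] [StarRing α]
    {A : Matrix m n α} {c : α} (hA : Aᴴ * A = c • 1) (a b : α) (R : Matrix n n α) :
    (a • 1 + b • (A * R * Aᴴ)) * A = A * (a • 1 + (b * c) • R) := by
  simp only [Matrix.add_mul, Matrix.mul_add, Matrix.smul_mul, Matrix.mul_smul, Matrix.one_mul,
    Matrix.mul_one, Matrix.mul_assoc, hA, smul_smul]

theorem conjTranspose_mul_inv_add_smul_mul_mul_conjTranspose_mul {α : Type*} [CommRing α]
    [StarRing α] {A : Matrix m n α} {c : α} (hA : Aᴴ * A = c • 1) {a b : α} {R : Matrix n n α}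
    (hM : IsUnit (a • 1 + b • (A * R * Aᴴ)).det) (hS : IsUnit (a • 1 + (b * c) • R).det) :
    Aᴴ * (a • 1 + b • (A * R * Aᴴ))⁻¹ * A = c • (a • 1 + (b * c) • R)⁻¹ := by
  rw [Matrix.mul_assoc, inv_mul_eq_mul_inv_of_mul_eq hM hS
    (add_smul_mul_mul_conjTranspose_mul hA a b R), ← Matrix.mul_assoc, hA, Matrix.smul_mul,
    Matrix.one_mul]

variable [RCLike 𝕜] {R : Matrix n n 𝕜}

namespace IsHermitian

theorem trace_cfc (hR : R.IsHermitian) (f : ℝ → ℝ) :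
    (cfc f R).trace = ∑ i, (f (hR.eigenvalues i) : 𝕜) := by
  rw [cfc_eq hR, IsHermitian.cfc, Unitary.conjStarAlgAut_apply, trace_mul_cycle,
    Unitary.coe_star_mul_self, Matrix.one_mul, trace_diagonal]
  rfl

theorem inv_cfc (hR : R.IsHermitian) {f : ℝ → ℝ} (hf : ∀ x ∈ spectrum ℝ R, f x ≠ 0) :
    (cfc f R)⁻¹ = cfc (fun x => (f x)⁻¹) R := by
  rw [nonsing_inv_eq_ringInverse,
    ← cfc_inv f R hf (R.finite_real_spectrum.continuousOn _) hR.isSelfAdjoint]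

theorem cfc_const_add_mul (hR : R.IsHermitian) (a b : ℝ) :
    cfc (fun x => a + b * x) R = (a : 𝕜) • 1 + (b : 𝕜) • R := by
  rw [cfc_const_add a (b * ·) R (by fun_prop) hR.isSelfAdjoint,
    cfc_const_mul_id _ _ hR.isSelfAdjoint, Algebra.algebraMap_eq_smul_one,
    RCLike.real_smul_eq_coe_smul (K := 𝕜), RCLike.real_smul_eq_coe_smul (K := 𝕜)]

end IsHermitian

theorem PosDef.inv_add_smul_inv_eq_cfc (hR : R.PosDef)
    {a b c : ℝ} (ha : 0 < a) (hb : 0 ≤ b) (hc : 0 ≤ c) :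
    (R⁻¹ + (c : 𝕜) • ((a : 𝕜) • 1 + (b : 𝕜) • R)⁻¹)⁻¹
      = cfc (fun x => (x⁻¹ + c * (a + b * x)⁻¹)⁻¹) R := by
  have hRh := hR.isHermitian
  have hspec : ∀ x ∈ spectrum ℝ R, 0 < x := by
    rw [hRh.spectrum_real_eq_range_eigenvalues]
    rintro _ ⟨i, rfl⟩
    exact hR.eigenvalues_pos i
  have hR_inv : R⁻¹ = cfc (fun x : ℝ => x⁻¹) R := by
    conv_lhs => rw [← cfc_id' ℝ R]
    exact hRh.inv_cfc fun x hx => (hspec x hx).ne'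
  have hS_inv : ((a : 𝕜) • 1 + (b : 𝕜) • R)⁻¹ = cfc (fun x => (a + b * x)⁻¹) R := by
    rw [← hRh.cfc_const_add_mul]
    exact hRh.inv_cfc fun x hx => by have := hspec x hx; positivity
  have hcont (f : ℝ → ℝ) : ContinuousOn f (spectrum ℝ R) := R.finite_real_spectrum.continuousOn f
  rw [hR_inv, hS_inv, ← RCLike.real_smul_eq_coe_smul, ← cfc_const_mul c _ R (hcont _),
    ← cfc_add R _ _ (hcont _) (hcont _)]
  exact hRh.inv_cfc fun x hx => by have := hspec x hx; positivity

end Matrix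

theorem llmmse_mse_pilot_contamination_general {L K : ℕ}
    (Rt : Matrix (Fin L) (Fin L) ℂ) (hRt : Rt.PosDef)
    (δ : Fin L → ℝ) (hδ : hRt.isHermitian.eigenvalues = δ)
    (A : Matrix (Fin K) (Fin L) ℂ) (Ex : ℝ) (hEx : 0 < Ex)
    (hA : Aᴴ * A = (((K : ℝ) * Ex : ℝ) : ℂ) • (1 : Matrix (Fin L) (Fin L) ℂ))
    (σw2 : ℝ) (hσw : 0 < σw2) (σI2 : ℝ) (hσI : 0 ≤ σI2)
    (ρ : ℝ) (hρ : ρ = Ex / σw2) :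
    Matrix.trace (Rt⁻¹ + Aᴴ *
        ((σw2 : ℂ) • (1 : Matrix (Fin K) (Fin K) ℂ) + (σI2 : ℂ) • (A * Rt * Aᴴ))⁻¹
        * A)⁻¹
      = ∑ i, ((δ i * (1 + ρ * K * δ i * σI2) /
          (1 + ρ * K * δ i + ρ * K * δ i * σI2) : ℝ) : ℂ) := by
  have hc : 0 ≤ (K : ℝ) * Ex := by positivity
  have hM : ((σw2 : ℂ) • (1 : Matrix (Fin K) (Fin K) ℂ) + (σI2 : ℂ) • (A * Rt * Aᴴ)).PosDef :=
    (PosDef.one.smul (by exact_mod_cast hσw)).add_posSemidef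
      ((hRt.posSemidef.mul_mul_conjTranspose_same A).smul (by exact_mod_cast hσI))
  have hS : ((σw2 : ℂ) • (1 : Matrix (Fin L) (Fin L) ℂ)
      + ((σI2 : ℂ) * ((K * Ex : ℝ) : ℂ)) • Rt).PosDef :=
    (PosDef.one.smul (by exact_mod_cast hσw)).add_posSemidef
      (hRt.posSemidef.smul (by exact_mod_cast mul_nonneg hσI hc))
  rw [conjTranspose_mul_inv_add_smul_mul_mul_conjTranspose_mul hA
      ((isUnit_iff_isUnit_det _).mp hM.isUnit) ((isUnit_iff_isUnit_det _).mp hS.isUnit),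
    ← Complex.ofReal_mul, ← RCLike.ofReal_eq_complex_ofReal,
    hRt.inv_add_smul_inv_eq_cfc hσw (mul_nonneg hσI hc) hc, hRt.isHermitian.trace_cfc, hδ]
  refine Finset.sum_congr rfl fun i _ => congrArg _ ?_
  have hδi : 0 < δ i := hδ ▸ hRt.eigenvalues_pos i
  subst hρ
  field_simp
  ring

/-- Theorem 2 of the paper (L-LMMSE MSE under pilot contamination): with
`AᴴA = K·E_x·I_L`, noise power `σ_w²`, per-subcarrier interference power `σ_𝓘²`,
tap correlation `R_t` with eigenvalues `δ_i`, and `ρ = E_x/σ_w²`,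
`trace((R_t⁻¹ + Aᴴ(σ_w²I_K + σ_𝓘²·A R_t Aᴴ)⁻¹A)⁻¹)
  = Σ_i δ_i(1 + ρKδ_iσ_𝓘²)/(1 + ρKδ_i + ρKδ_iσ_𝓘²)`. -/
theorem llmmse_mse_pilot_contamination {L K : ℕ} (hL : 0 < L) (hK : 0 < K)
    (Rt : Matrix (Fin L) (Fin L) ℂ) (hRt : Rt.PosDef)
    (δ : Fin L → ℝ) (hδ : hRt.isHermitian.eigenvalues = δ)
    (A : Matrix (Fin K) (Fin L) ℂ) (Ex : ℝ) (hEx : 0 < Ex)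
    (hA : Aᴴ * A = (((K : ℝ) * Ex : ℝ) : ℂ) • (1 : Matrix (Fin L) (Fin L) ℂ))
    (σw2 : ℝ) (hσw : 0 < σw2) (σI2 : ℝ) (hσI : 0 ≤ σI2)
    (ρ : ℝ) (hρ : ρ = Ex / σw2) :
    Matrix.trace (Rt⁻¹ + Aᴴ *
        ((σw2 : ℂ) • (1 : Matrix (Fin K) (Fin K) ℂ) + (σI2 : ℂ) • (A * Rt * Aᴴ))⁻¹
        * A)⁻¹
      = ∑ i, ((δ i * (1 + ρ * K * δ i * σI2) /
          (1 + ρ * K * δ i + ρ * K * δ i * σI2) : ℝ) : ℂ) :=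
  llmmse_mse_pilot_contamination_general Rt hRt δ hδ A Ex hEx hA σw2 hσw σI2 hσI ρ hρ
end

section
/- Let K be a positive integer, μ_1,…,μ_R and δ_1,…,δ_L positive reals, and σ_𝓘² > 0. Then lim_{ρ → ∞} Σ_{j=1}^{R} Σ_{i=1}^{L} μ_j·δ_i·(1 + ρK·μ_j·δ_i·σ_𝓘²)/(1 + ρK·μ_j·δ_i + ρK·μ_j·δ_i·σ_𝓘²) = (σ_𝓘²/(1 + σ_𝓘²))·(Σ_{j=1}^{R} μ_j)·(Σ_{i=1}^{L} δ_i), where the limit is over real ρ tending to infinity. (At high SNR the optimal centralized LMMSE MSE under pilot contamination converges to (σ_𝓘²/(1+σ_𝓘²))·trace(R_array)·trace(R_tap), independent of the number of pilots K.) -/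
open Filter Topology

theorem tendsto_affine_div_affine_atTop (p q r s : ℝ) (hs : s ≠ 0) :
    Tendsto (fun x : ℝ => (p + q * x) / (r + s * x)) atTop (𝓝 (q / s)) := by
  have hlim : Tendsto (fun x : ℝ => (p * x⁻¹ + q) / (r * x⁻¹ + s)) atTop
      (𝓝 ((p * 0 + q) / (r * 0 + s))) :=
    ((tendsto_inv_atTop_zero.const_mul p).add_const q).div
      ((tendsto_inv_atTop_zero.const_mul r).add_const s) (by simpa using hs)
  rw [mul_zero, mul_zero, zero_add, zero_add] at hlim
  refine hlim.congr' ?_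
  filter_upwards [eventually_gt_atTop (0 : ℝ)] with x hx
  rw [← mul_div_mul_right _ _ hx.ne']
  congr 1 <;> field_simp

/-- High-SNR limit of the optimal centralized LMMSE MSE under pilot contamination:
`Σ_j Σ_i μ_jδ_i(1 + ρKμ_jδ_iσ_𝓘²)/(1 + ρKμ_jδ_i + ρKμ_jδ_iσ_𝓘²)
  → (σ_𝓘²/(1+σ_𝓘²))·(Σ_j μ_j)·(Σ_i δ_i)` as the SNR `ρ → ∞`. -/
theorem olmmse_pc_high_snr_limit {R L : ℕ} (K : ℕ) (hK : 0 < K)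
    (μ : Fin R → ℝ) (hμ : ∀ j, 0 < μ j)
    (δ : Fin L → ℝ) (hδ : ∀ i, 0 < δ i) (σI2 : ℝ) (hσI : 0 < σI2) :
    Tendsto (fun ρ : ℝ => ∑ j, ∑ i, μ j * δ i * (1 + ρ * K * (μ j * δ i) * σI2) /
        (1 + ρ * K * (μ j * δ i) + ρ * K * (μ j * δ i) * σI2)) atTop
      (nhds ((σI2 / (1 + σI2)) * (∑ j, μ j) * ∑ i, δ i)) := by
  rw [mul_assoc, Finset.sum_mul_sum, Finset.mul_sum]
  refine tendsto_finsetSum _ fun j _ => ?_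
  rw [Finset.mul_sum]
  refine tendsto_finsetSum _ fun i _ => ?_
  have hs : (K : ℝ) * (μ j * δ i) * (1 + σI2) ≠ 0 := by
    have := hμ j; have := hδ i; positivity
  convert tendsto_affine_div_affine_atTop (μ j * δ i) (μ j * δ i * (K * (μ j * δ i) * σI2)) 1
    (K * (μ j * δ i) * (1 + σI2)) hs using 1
  · ext ρ; ring_nf
  · field_simp
end

section
/- Let n ≥ 1, let R be an invertible d×d complex matrix, and for i = 1,…,n let W_i be an invertible m_i×m_i complex matrix, A_i an m_i×d complex matrix, and y_i ∈ ℂ^{m_i}. Suppose C_i := (R⁻¹ + A_iᴴW_i⁻¹A_i)⁻¹ exists for each i, set ĥ_i := C_i·A_iᴴW_i⁻¹y_i, and suppose C := (R⁻¹ + Σ_{i=1}^{n} A_iᴴW_i⁻¹A_i)⁻¹ exists with ĥ := C·Σ_{i=1}^{n} A_iᴴW_i⁻¹y_i. Then C⁻¹ = Σ_{i=1}^{n} C_i⁻¹ − (n−1)·R⁻¹ and C⁻¹·ĥ = Σ_{i=1}^{n} C_i⁻¹·ĥ_i. (n-observation generalization of the optimal LMMSE combining lemma, which justifies the update rule of the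 distributed LMMSE algorithm where each antenna combines its own weighted estimate with those received from its neighbors.) -/
open Matrix

/-- `n`-observation generalization of the optimal LMMSE combining lemma: with
`C_i = (R⁻¹ + A_iᴴW_i⁻¹A_i)⁻¹`, `ĥ_i = C_i A_iᴴW_i⁻¹ y_i`,
`C = (R⁻¹ + Σ_i A_iᴴW_i⁻¹A_i)⁻¹` and `ĥ = C·Σ_i A_iᴴW_i⁻¹ y_i`, one has
`C⁻¹ = Σ_i C_i⁻¹ − (n−1)·R⁻¹` and `C⁻¹·ĥ = Σ_i C_i⁻¹·ĥ_i`. -/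
theorem lmmse_combining_n {n d : ℕ} (hn : 1 ≤ n)
    (R : Matrix (Fin d) (Fin d) ℂ) (hR : IsUnit R)
    (m : Fin n → ℕ)
    (W : ∀ i, Matrix (Fin (m i)) (Fin (m i)) ℂ) (hW : ∀ i, IsUnit (W i))
    (A : ∀ i, Matrix (Fin (m i)) (Fin d) ℂ)
    (y : ∀ i, Fin (m i) → ℂ)
    (C : ∀ i, Matrix (Fin d) (Fin d) ℂ)
    (hC : ∀ i, C i = (R⁻¹ + (A i)ᴴ * (W i)⁻¹ * A i)⁻¹)
    (hCinv : ∀ i, IsUnit (R⁻¹ + (A i)ᴴ * (W i)⁻¹ * A i))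
    (h : ∀ i, Fin d → ℂ)
    (hh : ∀ i, h i = (C i * (A i)ᴴ * (W i)⁻¹) *ᵥ y i)
    (Cfull : Matrix (Fin d) (Fin d) ℂ)
    (hCfull : Cfull = (R⁻¹ + ∑ i, (A i)ᴴ * (W i)⁻¹ * A i)⁻¹)
    (hCfullinv : IsUnit (R⁻¹ + ∑ i, (A i)ᴴ * (W i)⁻¹ * A i))
    (hfull : Fin d → ℂ)
    (hhfull : hfull = Cfull *ᵥ ∑ i, ((A i)ᴴ * (W i)⁻¹) *ᵥ y i) :
    Cfull⁻¹ = (∑ i, (C i)⁻¹) - ((n : ℂ) - 1) • R⁻¹ ∧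
      Cfull⁻¹ *ᵥ hfull = ∑ i, (C i)⁻¹ *ᵥ h i := by
  have hCi : ∀ i, (C i)⁻¹ = R⁻¹ + (A i)ᴴ * (W i)⁻¹ * A i := by
    intro i
    rw [hC i, Matrix.nonsing_inv_nonsing_inv _ ((Matrix.isUnit_iff_isUnit_det _).mp (hCinv i))]
  have hCf : Cfull⁻¹ = R⁻¹ + ∑ i, (A i)ᴴ * (W i)⁻¹ * A i := by
    rw [hCfull, Matrix.nonsing_inv_nonsing_inv _ ((Matrix.isUnit_iff_isUnit_det _).mp hCfullinv)]
  constructor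
  · rw [hCf]
    simp only [hCi, Finset.sum_add_distrib, Finset.sum_const, Finset.card_univ,
      Fintype.card_fin, sub_smul, one_smul, Nat.cast_smul_eq_nsmul ℂ]
    abel
  · have hCfmul : Cfull⁻¹ * Cfull = 1 := by
      rw [hCfull]
      exact Matrix.nonsing_inv_mul _
        (Matrix.isUnit_nonsing_inv_det _ ((Matrix.isUnit_iff_isUnit_det _).mp hCfullinv))
    have hCimul : ∀ i, (C i)⁻¹ * C i = 1 := by
      intro i
      rw [hC i]
      exact Matrix.nonsing_inv_mul _
        (Matrix.isUnit_nonsing_inv_det _ ((Matrix.isUnit_iff_isUnit_det _).mp (hCinv i)))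
    rw [hhfull, Matrix.mulVec_mulVec, hCfmul, Matrix.one_mulVec]
    refine Finset.sum_congr rfl fun i _ => ?_
    rw [hh i, Matrix.mulVec_mulVec, ← Matrix.mul_assoc, ← Matrix.mul_assoc, hCimul i,
      Matrix.one_mul]
end
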